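/- Suppose det(T_ψ) ≠ 0. Then the kernel of H_n(ψ) equals the image of the symmetric subspace of (ℂ²)^{⊗n} under the invertible linear map T^{all}_ψ = I ⊗ T_ψ ⊗ T_ψ² ⊗ ⋯ ⊗ T_ψ^{n−1}; in particular this kernel has dimension n+1. -/

import Mathlib

open scoped BigOperators
open Matrix Polynomial

noncomputable section

/-- A two-site operator `A` applied to qubits `i` and `j` of an `n`-qubit chain,
acting as the identity on the remaining qubits. -/
def twoSite (n : ℕ) (A : Matrix (Fin 2 × Fin 2) (Fin 2 × Fin 2) ℂ) (i j : Fin n) :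
    Matrix (Fin n → Fin 2) (Fin n → Fin 2) ℂ :=
  fun x y => A (x i, x j) (y i, y j) *
    ∏ k : Fin n, if k = i ∨ k = j then 1 else (if x k = y k then 1 else 0)

/-- The rank-one projector `|ψ⟩⟨ψ|` onto a two-qubit state `ψ`. -/
def vecProj (ψ : Fin 2 × Fin 2 → ℂ) : Matrix (Fin 2 × Fin 2) (Fin 2 × Fin 2) ℂ :=
  fun a b => ψ a * star (ψ b)

/-- Open-boundary chain Hamiltonian with (possibly) site-dependent forbidden states:
`H_n(ψ₁,…,ψ_{n-1}) = Σ_j |ψ_j⟩⟨ψ_j|_{j,j+1}` (here `ψs` is 0-indexed). -/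
def HnGen (n : ℕ) (ψs : ℕ → Fin 2 × Fin 2 → ℂ) :
    Matrix (Fin n → Fin 2) (Fin n → Fin 2) ℂ :=
  ∑ i : Fin n,
    if h : (i : ℕ) + 1 < n then twoSite n (vecProj (ψs (i : ℕ))) i ⟨(i : ℕ) + 1, h⟩ else 0

/-- Translation-invariant open-boundary Hamiltonian `H_n(ψ)`. -/
def Hn (n : ℕ) (ψ : Fin 2 × Fin 2 → ℂ) : Matrix (Fin n → Fin 2) (Fin n → Fin 2) ℂ :=
  HnGen n fun _ => ψ

/-- The matrix `T_ψ`. -/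
def Tmat (ψ : Fin 2 × Fin 2 → ℂ) : Matrix (Fin 2) (Fin 2) ℂ :=
  !![star (ψ (0, 1)), star (ψ (1, 1)); -star (ψ (0, 0)), -star (ψ (1, 0))]

/-- The symmetric subspace of `(ℂ²)^{⊗n}`: vectors invariant under all permutations of the
tensor factors. -/
def SymSubspace (n : ℕ) : Submodule ℂ ((Fin n → Fin 2) → ℂ) where
  carrier := {x | ∀ σ : Equiv.Perm (Fin n), ∀ b, x (b ∘ σ) = x b}
  add_mem' := by
    intro a b ha hb σ z
    simp only [Pi.add_apply, ha σ z, hb σ z]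
  zero_mem' := by intro σ z; simp
  smul_mem' := by
    intro r a ha σ z
    simp only [Pi.smul_apply, ha σ z]

/-- The operator `T^{all}_ψ = I ⊗ T_ψ ⊗ T_ψ² ⊗ ⋯ ⊗ T_ψ^{n−1}`. -/
def Tall (n : ℕ) (ψ : Fin 2 × Fin 2 → ℂ) : Matrix (Fin n → Fin 2) (Fin n → Fin 2) ℂ :=
  fun x y => ∏ k : Fin n, (Tmat ψ ^ (k : ℕ)) (x k) (y k)

/-! The projector `|ψ⟩⟨ψ|` is positive semidefinite, so `ker H_n(ψ)` is the intersection of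
the kernels of its terms. With the singlet `ε = |01⟩ - |10⟩` one has `⟨ψ| = ⟨ε| (T_ψ ⊗ 1)`, and
`⟨ε| (M ⊗ M) = det M ⟨ε|` for every `2 × 2` matrix `M`; hence
`⟨ψ| (T_ψ^i ⊗ T_ψ^{i+1}) = (det T_ψ)^{i+1} ⟨ε|`. Splitting `T^{all}_ψ` into this two-site factor
and an invertible operator on the remaining sites, `|ψ⟩⟨ψ|_{i,i+1} T^{all}_ψ y = 0` iff
`⟨ε|_{i,i+1} y = 0`, i.e. iff `y` is invariant under exchanging the sites `i` and `i+1`.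
Adjacent transpositions generate the symmetric group, and a symmetric vector is determined by its
values on the `n + 1` words `1^m 0^{n-m}`. -/

open scoped Kronecker ComplexOrder

section PairSplit

variable {ι m : Type*} [DecidableEq ι] {i j : ι}

def Equiv.piSplitAtPair (hij : i ≠ j) :
    (ι → m) ≃ (m × m) × ({k // k ≠ i ∧ k ≠ j} → m) where
  toFun w := ((w i, w j), fun k => w k)
  invFun p k := if hi : k = i then p.1.1 else if hj : k = j then p.1.2 else p.2 ⟨k, hi, hj⟩
  left_inv w := by
    funext k
    by_cases hi : k = i
    · simp [hi]
    · by_cases hj : k = j <;> simp [hi, hj, hij.symm]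
  right_inv p := by
    obtain ⟨⟨a, b⟩, g⟩ := p
    ext k
    · simp
    · simp [hij.symm]
    · simp [k.2.1, k.2.2]

@[simp]
theorem Equiv.piSplitAtPair_apply (hij : i ≠ j) (w : ι → m) :
    Equiv.piSplitAtPair hij w = ((w i, w j), fun k : {k // k ≠ i ∧ k ≠ j} => w k) :=
  rfl

theorem Equiv.piSplitAtPair_comp_swap (hij : i ≠ j) (w : ι → m) :
    Equiv.piSplitAtPair hij (w ∘ Equiv.swap i j) =
      ((Equiv.piSplitAtPair hij w).1.swap, (Equiv.piSplitAtPair hij w).2) := by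
  ext k
  · simp
  · simp
  · simp [Equiv.swap_apply_of_ne_of_ne k.2.1 k.2.2]

theorem Equiv.piSplitAtPair_symm_comp_swap (hij : i ≠ j)
    (p : (m × m) × ({k // k ≠ i ∧ k ≠ j} → m)) :
    (Equiv.piSplitAtPair hij).symm p ∘ Equiv.swap i j =
      (Equiv.piSplitAtPair hij).symm (p.1.swap, p.2) := by
  rw [Equiv.eq_symm_apply, Equiv.piSplitAtPair_comp_swap, Equiv.apply_symm_apply]

theorem Fintype.prod_eq_mul_mul_prod_ne_ne [Fintype ι] {M : Type*} [CommMonoid M] (hij : i ≠ j)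
    (f : ι → M) : ∏ k, f k = f i * f j * ∏ k : {k // k ≠ i ∧ k ≠ j}, f k := by
  rw [← Finset.mul_prod_erase _ f (Finset.mem_univ i),
    ← Finset.mul_prod_erase _ f (Finset.mem_erase.mpr ⟨hij.symm, Finset.mem_univ j⟩),
    mul_assoc,
    Finset.prod_subtype (p := fun k => k ≠ i ∧ k ≠ j) _ (fun k => by simp [and_comm])]

end PairSplit

namespace Matrix

section PiKron

variable {ι m R : Type*} [Fintype ι] [CommRing R]

def piKron (B : ι → Matrix m m R) : Matrix (ι → m) (ι → m) R :=
  fun x y => ∏ k, B k (x k) (y k)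

theorem piKron_mul [DecidableEq ι] [Fintype m] (B C : ι → Matrix m m R) :
    piKron B * piKron C = piKron (B * C) := by
  ext x z
  simp only [piKron, mul_apply, Fintype.prod_sum, Pi.mul_apply, Finset.prod_mul_distrib]

theorem piKron_one [DecidableEq m] : piKron (1 : ι → Matrix m m R) = 1 := by
  ext x y
  simp [piKron, one_apply, Finset.prod_boole, funext_iff]

theorem isUnit_piKron [DecidableEq ι] [Fintype m] [DecidableEq m] {B : ι → Matrix m m R}
    (hB : ∀ k, IsUnit (B k)) : IsUnit (piKron B) := by
  refine isUnit_iff_exists.mpr ⟨piKron fun k => (B k)⁻¹, ?_, ?_⟩ <;>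
    rw [piKron_mul, ← piKron_one] <;> congr 1 <;> funext k
  · exact mul_nonsing_inv _ ((B k).isUnit_iff_isUnit_det.mp (hB k))
  · exact nonsing_inv_mul _ ((B k).isUnit_iff_isUnit_det.mp (hB k))

theorem piKron_eq_submatrix [DecidableEq ι] {i j : ι} (hij : i ≠ j) (B : ι → Matrix m m R) :
    piKron B = ((B i ⊗ₖ B j) ⊗ₖ piKron fun k : {k // k ≠ i ∧ k ≠ j} => B k).submatrix
      (Equiv.piSplitAtPair hij) (Equiv.piSplitAtPair hij) := by
  ext x y
  simp [piKron, kroneckerMap_apply, Fintype.prod_eq_mul_mul_prod_ne_ne hij]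

end PiKron

theorem kronecker_one_mulVec_apply {l m R : Type*} [Fintype l] [Fintype m] [DecidableEq m]
    [CommRing R] (A : Matrix l l R) (z : l × m → R) (p : l) (g : m) :
    ((A ⊗ₖ (1 : Matrix m m R)) *ᵥ z) (p, g) = ∑ q, A p q * z (q, g) := by
  simp [mulVec, dotProduct, kroneckerMap_apply, one_apply, Fintype.sum_prod_type]

theorem sum_mulVec_eq_zero_iff {ι 𝕜 l : Type*} [RCLike 𝕜] [Fintype l] {s : Finset ι}
    {A : ι → Matrix l l 𝕜} (hA : ∀ k ∈ s, (A k).PosSemidef) (x : l → 𝕜) :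
    (∑ k ∈ s, A k) *ᵥ x = 0 ↔ ∀ k ∈ s, A k *ᵥ x = 0 := by
  rw [← (posSemidef_sum s hA).dotProduct_mulVec_zero_iff, sum_mulVec, dotProduct_sum,
    Finset.sum_eq_zero_iff_of_nonneg fun k hk => (hA k hk).dotProduct_mulVec_nonneg x]
  exact forall₂_congr fun k hk => (hA k hk).dotProduct_mulVec_zero_iff x

end Matrix

def singlet {R : Type*} [Ring R] : Fin 2 × Fin 2 → R := Pi.single (0, 1) 1 - Pi.single (1, 0) 1

theorem singlet_dotProduct {R : Type*} [Ring R] (v : Fin 2 × Fin 2 → R) :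
    singlet ⬝ᵥ v = v (0, 1) - v (1, 0) := by
  simp [singlet, sub_dotProduct]

theorem singlet_vecMul_kronecker_self {R : Type*} [CommRing R] (M : Matrix (Fin 2) (Fin 2) R) :
    singlet ᵥ* (M ⊗ₖ M) = M.det • singlet := by
  ext ⟨a, b⟩
  fin_cases a <;> fin_cases b <;> simp [vecMul, det_fin_two, singlet] <;> ring

theorem Fin.ne_mk_val_add_one {n : ℕ} (i : Fin n) (h : (i : ℕ) + 1 < n) :
    i ≠ ⟨i + 1, h⟩ := by
  simp [Fin.ext_iff]

section TwoSite

variable {n : ℕ} {i j : Fin n}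

theorem twoSite_eq_submatrix (hij : i ≠ j) (A : Matrix (Fin 2 × Fin 2) (Fin 2 × Fin 2) ℂ) :
    twoSite n A i j = (A ⊗ₖ (1 : Matrix ({k // k ≠ i ∧ k ≠ j} → Fin 2) _ ℂ)).submatrix
      (Equiv.piSplitAtPair hij) (Equiv.piSplitAtPair hij) := by
  have hk (k : {k // k ≠ i ∧ k ≠ j}) : ¬(k.1 = i ∨ k.1 = j) := not_or.2 k.2
  ext x y
  rw [twoSite, Fintype.prod_eq_mul_mul_prod_ne_ne hij]
  simp [kroneckerMap_apply, one_apply, funext_iff, Finset.prod_boole, hk]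

theorem twoSite_smul (c : ℂ) (A : Matrix (Fin 2 × Fin 2) (Fin 2 × Fin 2) ℂ) :
    twoSite n (c • A) i j = c • twoSite n A i j := by
  ext x y
  simp [twoSite, mul_assoc]

theorem posSemidef_twoSite (hij : i ≠ j) {A : Matrix (Fin 2 × Fin 2) (Fin 2 × Fin 2) ℂ}
    (hA : A.PosSemidef) : (twoSite n A i j).PosSemidef := by
  rw [twoSite_eq_submatrix hij]
  exact (hA.kronecker PosSemidef.one).submatrix _

theorem twoSite_mul_piKron (hij : i ≠ j) (A : Matrix (Fin 2 × Fin 2) (Fin 2 × Fin 2) ℂ)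
    (B : Fin n → Matrix (Fin 2) (Fin 2) ℂ) :
    twoSite n A i j * piKron B =
      piKron (fun k => if k = i ∨ k = j then 1 else B k) *
        twoSite n (A * (B i ⊗ₖ B j)) i j := by
  have hk (k : {k // k ≠ i ∧ k ≠ j}) : ¬(k.1 = i ∨ k.1 = j) := not_or.2 k.2
  simp only [twoSite_eq_submatrix hij, piKron_eq_submatrix hij, submatrix_mul_equiv,
    ← mul_kronecker_mul]
  simp [hk]

theorem mulVec_twoSite_vecMulVec_eq_zero_iff (hij : i ≠ j) {u : Fin 2 × Fin 2 → ℂ}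
    (hu : u ≠ 0) (φ : Fin 2 × Fin 2 → ℂ) (y : (Fin n → Fin 2) → ℂ) :
    twoSite n (vecMulVec u φ) i j *ᵥ y = 0 ↔
      ∀ g, φ ⬝ᵥ (fun q => y ((Equiv.piSplitAtPair hij).symm (q, g))) = 0 := by
  obtain ⟨p, hp⟩ := Function.ne_iff.mp hu
  rw [twoSite_eq_submatrix hij, submatrix_mulVec_equiv, funext_iff,
    (Equiv.piSplitAtPair hij).forall_congr_left]
  simp only [Prod.forall, Function.comp_apply, Equiv.apply_symm_apply, kronecker_one_mulVec_apply,
    vecMulVec_apply, dotProduct, mul_assoc, ← Finset.mul_sum, Pi.zero_apply, mul_eq_zero]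
  exact ⟨fun h g => (h _ _ g).resolve_left hp, fun h _ _ g => Or.inr (h g)⟩

theorem mulVec_twoSite_vecMulVec_singlet_eq_zero_iff (hij : i ≠ j) {u : Fin 2 × Fin 2 → ℂ}
    (hu : u ≠ 0) (y : (Fin n → Fin 2) → ℂ) :
    twoSite n (vecMulVec u singlet) i j *ᵥ y = 0 ↔ ∀ w, y (w ∘ Equiv.swap i j) = y w := by
  rw [mulVec_twoSite_vecMulVec_eq_zero_iff hij hu, (Equiv.piSplitAtPair hij).forall_congr_left]
  simp only [Equiv.piSplitAtPair_symm_comp_swap, Prod.forall, Prod.swap_prod_mk, singlet_dotProduct]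
  refine ⟨fun h a b g => ?_, fun h g => sub_eq_zero.mpr (h 1 0 g)⟩
  fin_cases a <;> fin_cases b <;> simp [sub_eq_zero.mp (h g)]

end TwoSite

section Chain

variable {ψ : Fin 2 × Fin 2 → ℂ} {n : ℕ}

theorem mulVec_Hn_eq_zero_iff (x : (Fin n → Fin 2) → ℂ) :
    Hn n ψ *ᵥ x = 0 ↔
      ∀ (i : Fin n) (h : (i : ℕ) + 1 < n),
        twoSite n (vecProj ψ) i ⟨i + 1, h⟩ *ᵥ x = 0 := by
  rw [Hn, HnGen, sum_mulVec_eq_zero_iff]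
  · refine forall_congr' fun i => ?_
    split_ifs with h <;> simp [h]
  · intro i _
    split_ifs with h
    · exact posSemidef_twoSite (i.ne_mk_val_add_one h) (posSemidef_vecMulVec_self_star ψ)
    · exact PosSemidef.zero

theorem isUnit_Tmat (hdet : (Tmat ψ).det ≠ 0) : IsUnit (Tmat ψ) :=
  (isUnit_iff_isUnit_det _).2 hdet.isUnit

theorem star_eq_singlet_vecMul_Tmat_kronecker_one (ψ : Fin 2 × Fin 2 → ℂ) :
    star ψ = singlet ᵥ* (Tmat ψ ⊗ₖ 1) := by
  ext ⟨a, b⟩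
  fin_cases a <;> fin_cases b <;> simp [vecMul, dotProduct, Tmat, singlet, Fintype.sum_prod_type]

theorem vecProj_mul_Tmat_pow_kronecker (ψ : Fin 2 × Fin 2 → ℂ) (m : ℕ) :
    vecProj ψ * ((Tmat ψ ^ m) ⊗ₖ (Tmat ψ ^ (m + 1))) =
      (Tmat ψ).det ^ (m + 1) • vecMulVec ψ singlet := by
  rw [show vecProj ψ = vecMulVec ψ (star ψ) from rfl, vecMulVec_mul,
    star_eq_singlet_vecMul_Tmat_kronecker_one, vecMul_vecMul, ← mul_kronecker_mul, one_mul,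
    ← pow_succ', singlet_vecMul_kronecker_self, det_pow, vecMulVec_smul]

theorem mulVec_twoSite_vecProj_mulVec_Tall_eq_zero_iff (hdet : (Tmat ψ).det ≠ 0) (i : Fin n)
    (h : (i : ℕ) + 1 < n) (y : (Fin n → Fin 2) → ℂ) :
    twoSite n (vecProj ψ) i ⟨i + 1, h⟩ *ᵥ (Tall n ψ *ᵥ y) = 0 ↔
      ∀ w, y (w ∘ Equiv.swap i ⟨i + 1, h⟩) = y w := by
  have hψ : ψ ≠ 0 := by rintro rfl; simp [Tmat] at hdet
  have hB : IsUnit (piKron fun k : Fin n =>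
      if k = i ∨ k = ⟨i + 1, h⟩ then 1 else Tmat ψ ^ (k : ℕ)) :=
    isUnit_piKron fun k => by split_ifs; exacts [isUnit_one, (isUnit_Tmat hdet).pow _]
  rw [mulVec_mulVec, show Tall n ψ = piKron fun k : Fin n => Tmat ψ ^ (k : ℕ) from rfl,
    twoSite_mul_piKron (i.ne_mk_val_add_one h), ← mulVec_mulVec,
    (mulVec_injective_of_isUnit hB).eq_iff' (mulVec_zero _), vecProj_mul_Tmat_pow_kronecker,
    twoSite_smul, smul_mulVec, smul_eq_zero, or_iff_right (pow_ne_zero _ hdet),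
    mulVec_twoSite_vecMulVec_singlet_eq_zero_iff (i.ne_mk_val_add_one h) hψ]

end Chain

theorem Equiv.Perm.exists_comp_eq_of_card_eq {ι : Type*} [Fintype ι] {b c : ι → Fin 2}
    (h : Fintype.card {k // b k = 1} = Fintype.card {k // c k = 1}) :
    ∃ σ : Equiv.Perm ι, c ∘ σ = b := by
  have hc : Fintype.card {k // ¬b k = 1} = Fintype.card {k // ¬c k = 1} := by
    simp only [Fintype.card_subtype_compl, h]
  refine ⟨Equiv.subtypeCongr (Fintype.equivOfCardEq h) (Fintype.equivOfCardEq hc),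
    funext fun k => ?_⟩
  by_cases hk : b k = 1
  · simpa [Equiv.subtypeCongr, Equiv.sumCompl_symm_apply_of_pos hk, hk] using
      (Fintype.equivOfCardEq h ⟨k, hk⟩).2
  · have hck := (Fintype.equivOfCardEq hc ⟨k, hk⟩).2
    rw [Equiv.subtypeCongr, Function.comp_apply, Equiv.trans_apply, Equiv.trans_apply,
      Equiv.sumCompl_symm_apply_of_neg (p := fun k => b k = 1) hk]
    simp only [Equiv.sumCongr_apply, Sum.map_inr, Equiv.sumCompl_apply_inr]
    omega

namespace SymSubspace

variable {n : ℕ}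

def onesCount (b : Fin n → Fin 2) : Fin (n + 1) :=
  ⟨Fintype.card {k // b k = 1},
    Nat.lt_succ_of_le ((Fintype.card_subtype_le _).trans_eq (Fintype.card_fin n))⟩

def firstOnes (m : Fin (n + 1)) : Fin n → Fin 2 := fun k => if (k : ℕ) < m then 1 else 0

theorem val_onesCount (b : Fin n → Fin 2) : (onesCount b : ℕ) = Fintype.card {k // b k = 1} :=
  rfl

theorem onesCount_comp (b : Fin n → Fin 2) (σ : Equiv.Perm (Fin n)) :
    onesCount (b ∘ σ) = onesCount b := by
  rw [Fin.ext_iff, val_onesCount, val_onesCount]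
  exact Fintype.card_congr (σ.subtypeEquiv fun _ => Iff.rfl)

theorem onesCount_firstOnes (m : Fin (n + 1)) : onesCount (firstOnes m) = m := by
  ext
  simp [onesCount, firstOnes, Fintype.card_subtype, Fin.card_filter_val_lt, m.is_le]

theorem apply_firstOnes_onesCount {x : (Fin n → Fin 2) → ℂ} (hx : x ∈ SymSubspace n)
    (b : Fin n → Fin 2) : x (firstOnes (onesCount b)) = x b := by
  obtain ⟨σ, hσ⟩ :=
    Equiv.Perm.exists_comp_eq_of_card_eq (b := b) (c := firstOnes (onesCount b))
    (by rw [← val_onesCount, ← val_onesCount, onesCount_firstOnes])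
  rw [← hx σ, hσ]

def equivFun : SymSubspace n ≃ₗ[ℂ] (Fin (n + 1) → ℂ) where
  toFun x m := x.1 (firstOnes m)
  invFun c := ⟨c ∘ onesCount, fun σ b => congrArg c (onesCount_comp b σ)⟩
  left_inv x := Subtype.ext (funext (apply_firstOnes_onesCount x.2))
  right_inv c := funext fun m => congrArg c (onesCount_firstOnes m)
  map_add' _ _ := rfl
  map_smul' _ _ := rfl

theorem finrank_eq : Module.finrank ℂ (SymSubspace n) = n + 1 := by
  simp [equivFun.finrank_eq]

theorem mem_iff_forall_swap_succ (y : (Fin n → Fin 2) → ℂ) :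
    y ∈ SymSubspace n ↔ ∀ (i : Fin n) (h : (i : ℕ) + 1 < n) (w : Fin n → Fin 2),
      y (w ∘ Equiv.swap i ⟨i + 1, h⟩) = y w := by
  refine ⟨fun hy i h => hy _, fun hy => ?_⟩
  let S : Submonoid (Equiv.Perm (Fin n)) :=
    { carrier := {σ | ∀ w, y (w ∘ σ) = y w}
      one_mem' := fun _ => rfl
      mul_mem' := fun {σ τ} hσ hτ w => (hτ (w ∘ σ)).trans (hσ w) }
  obtain _ | m := n
  · exact fun σ w => congrArg y (Subsingleton.elim _ _)
  · have hS :
        Submonoid.closure (Set.range fun i : Fin m => Equiv.swap i.castSucc i.succ) ≤ S := by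
      rw [Submonoid.closure_le]
      rintro _ ⟨i, rfl⟩
      exact hy i.castSucc (by simp)
    rw [Equiv.Perm.mclosure_swap_castSucc_succ] at hS
    exact fun σ => hS trivial

end SymSubspace

theorem ground_space_entangled_case (ψ : Fin 2 × Fin 2 → ℂ)
    (hdet : (Tmat ψ).det ≠ 0)
    (n : ℕ) :
    Function.Bijective (Tall n ψ).mulVecLin ∧
    LinearMap.ker (Hn n ψ).mulVecLin = (SymSubspace n).map (Tall n ψ).mulVecLin ∧
    Module.finrank ℂ (LinearMap.ker (Hn n ψ).mulVecLin) = n + 1 := by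
  have hT : IsUnit (Tall n ψ) := isUnit_piKron fun k => (isUnit_Tmat hdet).pow _
  have bij : Function.Bijective (Tall n ψ).mulVecLin :=
    ⟨mulVec_injective_of_isUnit hT, mulVec_surjective_iff_isUnit.2 hT⟩
  have hker : LinearMap.ker (Hn n ψ).mulVecLin = (SymSubspace n).map (Tall n ψ).mulVecLin := by
    ext x
    obtain ⟨y, rfl⟩ := bij.2 x
    simp only [LinearMap.mem_ker, Submodule.mem_map, mulVecLin_apply,
      (mulVec_injective_of_isUnit hT).eq_iff, exists_eq_right]
    rw [mulVec_Hn_eq_zero_iff, SymSubspace.mem_iff_forall_swap_succ]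
    exact forall₂_congr fun i h => mulVec_twoSite_vecProj_mulVec_Tall_eq_zero_iff hdet i h y
  refine ⟨bij, hker, ?_⟩
  rw [hker, ← (Submodule.equivMapOfInjective _ bij.1 _).finrank_eq, SymSubspace.finrank_eq]
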